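/- (Analytic form of Theorem 1(ii): staggered work hours lower the total commuting cost.) In the equally spaced piecewise linear setting, let I ≥ 1, and for i = 1, …, I let μ_i > 0 and X_i > 0. Then Σ_{i=1}^I c̄₂(X_i, μ_i)·X_i < Σ_{i=1}^I c̄₁(X_i, μ_i)·X_i, where c̄₁ is computed with the single preferred time t₁ and c̄₂ with the two preferred times t₁ and t₂ = t₁ + d. -/
import Mathlib


open MeasureTheory

/-- Piecewise linear schedule delay cost with preferred arrival time `tk`. -/
noncomputable def sdc (β γ tk t : ℝ) : ℝ := if t < tk then β * (tk - t) else γ * (t - tk)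

/-- The `k`-th preferred arrival time `t_k = t₁ + (k-1)d`. -/
noncomputable def tpref (t₁ d : ℝ) (k : ℕ) : ℝ := t₁ + ((k : ℝ) - 1) * d

/-- The envelope `ĉ_K(t) = min_{1 ≤ k ≤ K} c_k(t)`. -/
noncomputable def env (β γ t₁ d : ℝ) (K : ℕ) (t : ℝ) : ℝ :=
  sInf ((fun k : ℕ => sdc β γ (tpref t₁ d k) t) '' Set.Icc 1 K)

/-- The sublevel set `Γ_K(c) = {t : ĉ_K(t) ≤ c}`. -/
noncomputable def Gam (β γ t₁ d : ℝ) (K : ℕ) (c : ℝ) : Set ℝ :=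
  {t : ℝ | env β γ t₁ d K t ≤ c}

/-- `IsCbar β γ t₁ d K X μ c` says that `c` is (a, hence the unique) value `c̄_K(X, μ)`:
`c ≥ 0` and `μ · Leb(Γ_K(c)) = X`. -/
noncomputable def IsCbar (β γ t₁ d : ℝ) (K : ℕ) (X μ c : ℝ) : Prop :=
  0 ≤ c ∧ μ * (volume (Gam β γ t₁ d K c)).toReal = X

lemma sdc_le_iff (β γ : ℝ) (hβ : 0 < β) (hγ : 0 < γ) (tk t c : ℝ) (hc : 0 ≤ c) :
    sdc β γ tk t ≤ c ↔ tk - c / β ≤ t ∧ t ≤ tk + c / γ := by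
  have hb := div_nonneg hc hβ.le
  have hg := div_nonneg hc hγ.le
  unfold sdc
  rcases lt_or_ge t tk with h | h
  · rw [if_pos h, mul_comm, ← le_div_iff₀ hβ]
    constructor
    · intro h1; exact ⟨by linarith, by linarith⟩
    · intro ⟨h1, _⟩; linarith
  · rw [if_neg (not_lt.mpr h), mul_comm, ← le_div_iff₀ hγ]
    constructor
    · intro h1; exact ⟨by linarith, by linarith⟩
    · intro ⟨_, h2⟩; linarith

lemma env_one (β γ t₁ d t : ℝ) : env β γ t₁ d 1 t = sdc β γ t₁ t := by
  unfold env
  rw [Set.Icc_self, Set.image_singleton, csInf_singleton]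
  norm_num [tpref]

lemma env_two (β γ t₁ d t : ℝ) :
    env β γ t₁ d 2 t = min (sdc β γ t₁ t) (sdc β γ (t₁ + d) t) := by
  unfold env
  have h : Set.Icc (1 : ℕ) 2 = {1, 2} := by ext n; simp [Set.mem_Icc]; omega
  rw [h, Set.image_pair, csInf_pair]
  norm_num [tpref]

lemma Gam_one (β γ : ℝ) (hβ : 0 < β) (hγ : 0 < γ) (t₁ d c : ℝ) (hc : 0 ≤ c) :
    Gam β γ t₁ d 1 c = Set.Icc (t₁ - c / β) (t₁ + c / γ) := by
  ext t
  simp [Gam, env_one, sdc_le_iff β γ hβ hγ t₁ t c hc, Set.mem_Icc]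

lemma Gam_two (β γ : ℝ) (hβ : 0 < β) (hγ : 0 < γ) (t₁ d c : ℝ) (hc : 0 ≤ c) :
    Gam β γ t₁ d 2 c =
      Set.Icc (t₁ - c / β) (t₁ + c / γ) ∪ Set.Icc (t₁ + d - c / β) (t₁ + d + c / γ) := by
  ext t
  simp [Gam, env_two, min_le_iff, sdc_le_iff β γ hβ hγ _ t c hc, Set.mem_Icc]

lemma vol_one (β γ : ℝ) (hβ : 0 < β) (hγ : 0 < γ) (t₁ d c : ℝ) (hc : 0 ≤ c) :
    (volume (Gam β γ t₁ d 1 c)).toReal = c / β + c / γ := by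
  have hb := div_nonneg hc hβ.le
  have hg := div_nonneg hc hγ.le
  rw [Gam_one β γ hβ hγ t₁ d c hc, Real.volume_Icc, ENNReal.toReal_ofReal (by linarith)]
  ring

lemma vol_two (β γ : ℝ) (hβ : 0 < β) (hγ : 0 < γ) (t₁ d : ℝ) (hd : 0 ≤ d) (c : ℝ) (hc : 0 ≤ c) :
    (volume (Gam β γ t₁ d 2 c)).toReal =
      min (2 * (c / β + c / γ)) (c / β + c / γ + d) := by
  have hb := div_nonneg hc hβ.le
  have hg := div_nonneg hc hγ.le
  rw [Gam_two β γ hβ hγ t₁ d c hc]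
  rcases le_or_gt (t₁ + d - c / β) (t₁ + c / γ) with h | h
  · rw [Set.Icc_union_Icc' h (by linarith)]
    rw [min_eq_left (by linarith), max_eq_right (by linarith), Real.volume_Icc,
      ENNReal.toReal_ofReal (by linarith)]
    rw [min_eq_right (by linarith)]
    ring
  · have hdisj : Disjoint (Set.Icc (t₁ - c / β) (t₁ + c / γ))
        (Set.Icc (t₁ + d - c / β) (t₁ + d + c / γ)) := by
      apply Set.disjoint_left.mpr
      intro x hx hx'
      simp only [Set.mem_Icc] at hx hx'
      linarith
    rw [measure_union hdisj measurableSet_Icc, Real.volume_Icc, Real.volume_Icc,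
      ENNReal.toReal_add ENNReal.ofReal_ne_top ENNReal.ofReal_ne_top,
      ENNReal.toReal_ofReal (by linarith), ENNReal.toReal_ofReal (by linarith)]
    rw [min_eq_left (by linarith)]
    ring


/-- Staggered work hours lower the total commuting cost (Theorem 1(ii), analytic form):
with `c̄₁` computed for the single preferred time `t₁` and `c̄₂` for the two preferred
times `t₁, t₁ + d`, one has `Σᵢ c̄₂(Xᵢ, μᵢ)·Xᵢ < Σᵢ c̄₁(Xᵢ, μᵢ)·Xᵢ`. -/
theorem stmt15 (β γ : ℝ) (hβ : 0 < β) (hγ : 0 < γ)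
    (d : ℝ) (hd : 0 < d) (t₁ : ℝ)
    (I : ℕ) (hI : 1 ≤ I) (μ X c₁ c₂ : ℕ → ℝ)
    (hμ : ∀ i : ℕ, 1 ≤ i → i ≤ I → 0 < μ i)
    (hX : ∀ i : ℕ, 1 ≤ i → i ≤ I → 0 < X i)
    (hc₁ : ∀ i : ℕ, 1 ≤ i → i ≤ I → IsCbar β γ t₁ d 1 (X i) (μ i) (c₁ i))
    (hc₂ : ∀ i : ℕ, 1 ≤ i → i ≤ I → IsCbar β γ t₁ d 2 (X i) (μ i) (c₂ i)) :
    ∑ i ∈ Finset.Icc 1 I, c₂ i * X i < ∑ i ∈ Finset.Icc 1 I, c₁ i * X i := by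
  apply Finset.sum_lt_sum_of_nonempty (Finset.nonempty_Icc.mpr hI)
  intro i hi
  rw [Finset.mem_Icc] at hi
  obtain ⟨hi1, hi2⟩ := hi
  have hμi := hμ i hi1 hi2
  have hXi := hX i hi1 hi2
  obtain ⟨h1nn, h1eq⟩ := hc₁ i hi1 hi2
  obtain ⟨h2nn, h2eq⟩ := hc₂ i hi1 hi2
  rw [vol_one β γ hβ hγ t₁ d (c₁ i) h1nn] at h1eq
  rw [vol_two β γ hβ hγ t₁ d hd.le (c₂ i) h2nn] at h2eq
  -- c₁ i > 0
  have hs1 : 0 < c₁ i / β + c₁ i / γ := by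
    have : μ i * (c₁ i / β + c₁ i / γ) = X i := h1eq
    nlinarith
  have hc1pos : 0 < c₁ i := by
    by_contra h
    push_neg at h
    have : c₁ i = 0 := le_antisymm h h1nn
    rw [this] at hs1; norm_num at hs1
  have hkey : min (2 * (c₂ i / β + c₂ i / γ)) (c₂ i / β + c₂ i / γ + d)
      = c₁ i / β + c₁ i / γ := by
    have := mul_left_cancel₀ (ne_of_gt hμi) (h2eq.trans h1eq.symm)
    exact this
  have hβγ : 0 < 1 / β + 1 / γ := by positivity
  have hc2lt : c₂ i < c₁ i := by
    rcases min_choice (2 * (c₂ i / β + c₂ i / γ)) (c₂ i / β + c₂ i / γ + d) with h | h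
    · rw [h] at hkey
      -- 2 c₂ s = c₁ s  ⇒ c₂ = c₁ / 2 < c₁
      have : 2 * c₂ i = c₁ i := by
        have h2 : 2 * (c₂ i * (1/β + 1/γ)) = c₁ i * (1/β + 1/γ) := by ring_nf; ring_nf at hkey; linarith
        nlinarith
      linarith
    · rw [h] at hkey
      -- c₂ s + d = c₁ s ⇒ c₂ < c₁
      have h2 : c₂ i * (1/β + 1/γ) + d = c₁ i * (1/β + 1/γ) := by ring_nf; ring_nf at hkey; linarith
      nlinarith
  exact mul_lt_mul_of_pos_right hc2lt hXi
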